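/- Let R be a v-Marot Mori commutative ring with R^• ≠ R^× such that R has exactly one regular prime v-ideal (|v-spec_r(R)| = 1). Then R is strongly primary: for every a ∈ R^• ∖ R^× there exists n ∈ ℕ such that every product of n elements of R^• ∖ R^× lies in a·R^•. -/

import Mathlib

/-!
Let `P` be the unique regular prime `v`-ideal and `a` a regular non-unit. In a Mori ring a
`v`-ideal that is maximal among the regular `v`-ideals containing `a` and missing the powers
of `b` is prime, so uniqueness of `P` gives two facts: every regular non-unit lies in `P`, and
every element of `P` has a power in `aR`. Being `v`-Marot and Mori, `P` is the `v`-closure of a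
finite set `G` of regular elements; the ideal generated by `G` lies in the radical of `aR`, so
some power of it lies in `aR`. A product of `N` regular non-units then lies in
`((G^N)_v) ⊆ (aR)_v = aR`.
-/

open Pointwise

namespace Paper

/-- The set of regular elements of a subset `A` of an ambient commutative ring `T`:
the elements of `A` that are non-zero-divisors on `A`. -/
def reg {T : Type*} [CommRing T] (A : Set T) : Set T :=
  {x | x ∈ A ∧ ∀ y ∈ A, x * y = 0 → y = 0}

/-- The units of a subset `A`: the elements of `A` having an inverse in `A`. -/
def unitsIn {T : Type*} [CommRing T] (A : Set T) : Set T :=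
  {x | x ∈ A ∧ ∃ y ∈ A, x * y = 1}

/-- `(R : X) = {z ∈ T : z·X ⊆ R}`. -/
def colonS {T : Type*} [CommRing T] (R : Subring T) (X : Set T) : Set T :=
  {z : T | ∀ x ∈ X, z * x ∈ R}

/-- The `v`-operation `X ↦ X_v = (X⁻¹)⁻¹ = (R : (R : X))`. -/
def vOp {T : Type*} [CommRing T] (R : Subring T) (X : Set T) : Set T :=
  colonS R (colonS R X)

/-- `M` is an `R`-submodule of the ambient ring `T`. -/
def IsSubmoduleOf {T : Type*} [CommRing T] (R : Subring T) (M : Set T) : Prop :=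
  (0 : T) ∈ M ∧ (∀ x ∈ M, ∀ y ∈ M, x + y ∈ M) ∧
    ∀ r ∈ (R : Set T), ∀ x ∈ M, r * x ∈ M

/-- `I` is an (integral) ideal of the subring `R`. -/
def IsIdealOf {T : Type*} [CommRing T] (R : Subring T) (I : Set T) : Prop :=
  IsSubmoduleOf R I ∧ I ⊆ (R : Set T)

/-- `P` is a prime ideal of the subring `R`. -/
def IsPrimeIdealOf {T : Type*} [CommRing T] (R : Subring T) (P : Set T) : Prop :=
  IsIdealOf R P ∧ P ≠ (R : Set T) ∧
    ∀ x ∈ (R : Set T), ∀ y ∈ (R : Set T), x * y ∈ P → x ∈ P ∨ y ∈ P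

/-- `R` is a `v`-Marot ring: every regular fractional `v`-ideal `I` is
`v`-generated by its set `I^•` of regular elements, i.e. `I = (I^•·R)_v`. -/
def IsVMarot {T : Type*} [CommRing T] (R : Subring T) : Prop :=
  ∀ I : Set T, IsSubmoduleOf R I → (∃ x ∈ I, x ∈ reg (Set.univ : Set T)) →
    (∃ c ∈ reg (R : Set T), ∀ x ∈ I, c * x ∈ R) → vOp R I = I →
    I = vOp R (I ∩ reg (Set.univ : Set T))

/-- `D` is completely integrally closed in the ambient total quotient ring `T`:
every almost integral element of `T` lies in `D`. -/
def IsCIC {T : Type*} [CommRing T] (D : Subring T) : Prop :=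
  ∀ x : T, (∃ c ∈ reg (D : Set T), ∀ n : ℕ, c * x ^ n ∈ D) → x ∈ D

/-- `D` is a Mori ring: the ascending chain condition holds on regular
divisorial integral ideals of `D`. -/
def IsMoriRing {T : Type*} [CommRing T] (D : Subring T) : Prop :=
  ∀ f : ℕ → Set T,
    (∀ n, f n ⊆ (D : Set T) ∧ vOp D (f n) = f n ∧ ∃ x ∈ f n, x ∈ reg (D : Set T)) →
    (∀ n, f n ⊆ f (n + 1)) → ∃ n, ∀ m, n ≤ m → f m = f n

/-- The ring `R` is strongly primary: `R^• ≠ R^×` and for every regular non-unit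
`a` there is `n ∈ ℕ` such that every product of `n` regular non-units lies in
`a·R^•`. -/
def IsStronglyPrimaryRing {T : Type*} [CommRing T] (R : Subring T) : Prop :=
  reg (R : Set T) ≠ unitsIn (R : Set T) ∧
    ∀ a ∈ reg (R : Set T), a ∉ unitsIn (R : Set T) →
      ∃ n : ℕ, 0 < n ∧ ∀ f : Fin n → T,
        (∀ i, f i ∈ reg (R : Set T) ∧ f i ∉ unitsIn (R : Set T)) →
          ∃ h ∈ reg (R : Set T), (∏ i, f i) = a * h

section VOperation

variable {T : Type*} [CommRing T] (R : Subring T)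

lemma colonS_anti {X Y : Set T} (h : X ⊆ Y) : colonS R Y ⊆ colonS R X :=
  fun _ hz x hx => hz x (h hx)

lemma subset_colonS_colonS (X : Set T) : X ⊆ colonS R (colonS R X) :=
  fun x hx z hz => mul_comm x z ▸ hz x hx

lemma subset_vOp (X : Set T) : X ⊆ vOp R X :=
  subset_colonS_colonS R X

lemma vOp_mono {X Y : Set T} (h : X ⊆ Y) : vOp R X ⊆ vOp R Y :=
  colonS_anti R (colonS_anti R h)

lemma colonS_vOp (X : Set T) : colonS R (vOp R X) = colonS R X :=
  (colonS_anti R (subset_vOp R X)).antisymm (subset_colonS_colonS R _)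

lemma vOp_vOp (X : Set T) : vOp R (vOp R X) = vOp R X :=
  congrArg (colonS R) (colonS_vOp R X)

lemma isSubmoduleOf_colonS (X : Set T) : IsSubmoduleOf R (colonS R X) := by
  refine ⟨fun x _ => by simp, fun z hz w hw x hx => ?_,
    fun r hr z hz x hx => ?_⟩
  · simpa only [add_mul] using R.add_mem (hz x hx) (hw x hx)
  · simpa only [mul_assoc] using R.mul_mem hr (hz x hx)

lemma vOp_subset_of_subset {X : Set T} (h : X ⊆ R) : vOp R X ⊆ R := fun z hz => by
  simpa using hz 1 fun x hx => by simpa using h hx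

lemma mul_mem_vOp {X Y : Set T} {z w : T} (hz : z ∈ vOp R X) (hw : w ∈ vOp R Y) :
    z * w ∈ vOp R (X * Y) := by
  intro u hu
  have huX : w * u ∈ colonS R X := fun x hx => by
    have hux : u * x ∈ colonS R Y := fun y hy => by
      simpa only [mul_assoc] using hu (x * y) (Set.mul_mem_mul hx hy)
    simpa only [mul_assoc] using hw _ hux
  simpa only [mul_assoc] using hz _ huX

lemma prod_mem_vOp_pow {X : Set T} {n : ℕ} (f : Fin n → T) (hf : ∀ i, f i ∈ vOp R X) :
    ∏ i, f i ∈ vOp R (X ^ n) := by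
  induction n with
  | zero => simpa using subset_vOp R 1 Set.one_mem_one
  | succ n ih =>
    rw [Fin.prod_univ_succ, pow_succ']
    exact mul_mem_vOp R (hf 0) (ih _ fun i => hf i.succ)

lemma vOp_smul_subring {a : T} (ha : IsUnit a) : vOp R (a • (R : Set T)) = a • (R : Set T) := by
  refine Set.Subset.antisymm (fun w hw => ?_) (subset_vOp R _)
  have hinv : (↑ha.unit⁻¹ : T) ∈ colonS R (a • (R : Set T)) := by
    rintro _ ⟨r, hr, rfl⟩
    simpa [← mul_assoc] using hr
  exact ⟨w * ↑ha.unit⁻¹, hw _ hinv, by simp [mul_left_comm a w]⟩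

end VOperation

section Regular

variable {T : Type*} [CommRing T] (R : Subring T)

lemma mul_mem_reg {x y : T} (hx : x ∈ reg (R : Set T)) (hy : y ∈ reg (R : Set T)) :
    x * y ∈ reg (R : Set T) := by
  refine ⟨R.mul_mem hx.1 hy.1, fun z hz h => hy.2 z hz (hx.2 (y * z) (R.mul_mem hy.1 hz) ?_)⟩
  rwa [← mul_assoc]

lemma one_mem_reg : (1 : T) ∈ reg (R : Set T) :=
  ⟨R.one_mem, fun y _ h => by simpa using h⟩

lemma prod_mem_reg {n : ℕ} (f : Fin n → T) (hf : ∀ i, f i ∈ reg (R : Set T)) :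
    ∏ i, f i ∈ reg (R : Set T) :=
  Finset.prod_induction f _ (fun _ _ => mul_mem_reg R) (one_mem_reg R) fun i _ => hf i

lemma mem_reg_of_mul_mem_reg {x y : T} (hy : y ∈ R) (hxy : x * y ∈ reg (R : Set T)) :
    y ∈ reg (R : Set T) :=
  ⟨hy, fun z hz h => hxy.2 z hz (by rw [mul_assoc, h, mul_zero])⟩

lemma mem_reg_of_mem_reg_univ {x : T} (hx : x ∈ R) (hreg : x ∈ reg (Set.univ : Set T)) :
    x ∈ reg (R : Set T) :=
  ⟨hx, fun y _ h => hreg.2 y trivial h⟩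

lemma mem_reg_univ_of_isUnit {x : T} (hx : IsUnit x) : x ∈ reg (Set.univ : Set T) :=
  ⟨trivial, fun _ _ h => (hx.mul_right_eq_zero).1 h⟩

end Regular

/-- A finitely generated ideal inside a radical has a power inside it. -/
lemma exists_pow_subset_smul_subring {T : Type*} [CommRing T] {R : Subring T} {G : Finset T}
    (hG : ↑G ⊆ (R : Set T)) {a : T} (ha : a ∈ R)
    (hpow : ∀ g ∈ G, ∃ n : ℕ, g ^ n ∈ a • (R : Set T)) :
    ∃ N, 0 < N ∧ (↑G : Set T) ^ N ⊆ a • (R : Set T) := by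
  let I : Ideal R := Ideal.span (Subtype.val ⁻¹' ↑G)
  have hrad : I ≤ (Ideal.span {⟨a, ha⟩}).radical := by
    refine Ideal.span_le.2 fun g hg => ?_
    obtain ⟨n, r, hr, hgr⟩ := hpow g hg
    refine ⟨n, Ideal.mem_span_singleton'.2 ⟨⟨r, hr⟩, Subtype.ext ?_⟩⟩
    simp [mul_comm, ← hgr]
  obtain ⟨N, hN⟩ := Ideal.exists_pow_le_of_le_radical_of_fg hrad
    (Submodule.fg_span (G.finite_toSet.preimage Subtype.val_injective.injOn))
  have hGI (n : ℕ) : (↑G : Set T) ^ n ⊆ Subtype.val '' ((I ^ n : Ideal R) : Set R) := by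
    induction n with
    | zero => simp
    | succ n ih =>
      rw [pow_succ, Set.mul_subset_iff]
      intro x hx y hy
      obtain ⟨u, hu, rfl⟩ := ih hx
      refine ⟨u * ⟨y, hG hy⟩, ?_, rfl⟩
      rw [pow_succ]
      exact Submodule.mul_mem_mul hu (Ideal.subset_span hy)
  refine ⟨N + 1, N.succ_pos, (hGI _).trans ?_⟩
  rintro _ ⟨u, hu, rfl⟩
  obtain ⟨r, hr⟩ := Ideal.mem_span_singleton'.1 (hN (Ideal.pow_le_pow_right N.le_succ hu))
  exact ⟨r, r.2, by simp [← hr, mul_comm]⟩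

section Mori

variable {T : Type*} [CommRing T] (R : Subring T)

def IsRegularVIdeal (J : Set T) : Prop :=
  J ⊆ R ∧ vOp R J = J ∧ ∃ x ∈ J, x ∈ reg (R : Set T)

variable {R}

lemma IsMoriRing.wellFoundedGT (hmori : IsMoriRing R) :
    WellFoundedGT {J : Set T // IsRegularVIdeal R J} := by
  refine wellFoundedGT_iff_monotone_chain_condition.2 fun f => ?_
  obtain ⟨n, hn⟩ := hmori (fun n => (f n).1) (fun n => (f n).2)
    fun n => f.monotone n.le_succ
  exact ⟨n, fun m hm => Subtype.ext (hn m hm).symm⟩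

lemma IsMoriRing.exists_maximal (hmori : IsMoriRing R) {F : Set T → Prop}
    (hF : ∀ J, F J → IsRegularVIdeal R J) {I : Set T} (hI : F I) :
    ∃ J, F J ∧ ∀ K, F K → J ⊆ K → K = J := by
  have := hmori.wellFoundedGT
  obtain ⟨⟨J, _⟩, hJ, hmax⟩ :=
    wellFounded_gt.has_min {J : {J // IsRegularVIdeal R J} | F J.1} ⟨⟨I, hF I hI⟩, hI⟩
  refine ⟨J, hJ, fun K hK hJK => by_contra fun hne => hmax ⟨K, hF K hK⟩ hK ?_⟩
  exact lt_of_le_of_ne hJK fun h => hne (congrArg Subtype.val h).symm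

/-- Mori rings are `v`-noetherian. -/
lemma IsMoriRing.exists_finset_vOp_eq (hmori : IsMoriRing R) {S : Set T} (hS : S ⊆ R)
    {a : T} (haS : a ∈ S) (ha : a ∈ reg (R : Set T)) :
    ∃ G : Finset T, ↑G ⊆ S ∧ vOp R ↑G = vOp R S := by
  classical
  let F : Set T → Prop := fun J => ∃ E : Finset T, ↑E ⊆ S ∧ a ∈ E ∧ J = vOp R ↑E
  have hF : ∀ J, F J → IsRegularVIdeal R J := by
    rintro _ ⟨E, hES, haE, rfl⟩
    exact ⟨vOp_subset_of_subset R (hES.trans hS), vOp_vOp R _, a, subset_vOp R _ haE, ha⟩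
  obtain ⟨_, ⟨E, hES, haE, rfl⟩, hmax⟩ :=
    hmori.exists_maximal hF (I := vOp R {a}) ⟨{a}, by simpa using haS, by simp, by simp⟩
  have hSE : S ⊆ vOp R ↑E := fun x hx => by
    have hEx : ↑E ⊆ (↑(insert x E) : Set T) := by simp [Set.subset_insert]
    rw [← hmax _ ⟨insert x E, by simpa [Set.insert_subset_iff] using ⟨hx, hES⟩,
      Finset.mem_insert_of_mem haE, rfl⟩ (vOp_mono R hEx)]
    exact subset_vOp R _ (by simp)
  refine ⟨E, hES, (vOp_mono R hES).antisymm ?_⟩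
  simpa only [vOp_vOp] using vOp_mono R hSE

lemma IsVMarot.eq_vOp_inter_reg (hvm : IsVMarot R) {I : Set T} (hI : IsIdealOf R I)
    (hIv : vOp R I = I) {a : T} (haI : a ∈ I) (ha : IsUnit a) :
    I = vOp R (I ∩ reg (R : Set T)) := by
  have hgen := hvm I hI.1 ⟨a, haI, mem_reg_univ_of_isUnit ha⟩
    ⟨1, one_mem_reg R, fun x hx => by simpa using hI.2 hx⟩ hIv
  refine Set.Subset.antisymm (hgen.trans_subset (vOp_mono R ?_)) ?_
  · exact fun x hx => ⟨hx.1, mem_reg_of_mem_reg_univ R (hI.2 hx.1) hx.2⟩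
  · exact (vOp_mono R Set.inter_subset_left).trans hIv.subset

end Mori

section Prime

variable {T : Type*} [CommRing T] {R : Subring T}

/-- Regular prime `v`-ideals: the elements of `v-spec_r(R)`. -/
def IsRegularPrimeVIdeal (R : Subring T) (P : Set T) : Prop :=
  IsPrimeIdealOf R P ∧ vOp R P = P ∧ ∃ x ∈ P, x ∈ reg (R : Set T)

lemma IsSubmoduleOf.add_smul_mul_add_smul_subset {P : Set T} (hP : IsSubmoduleOf R P)
    (hPR : P ⊆ R) {x y : T} (hx : x ∈ R) (hy : y ∈ R) (hxy : x * y ∈ P) :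
    (P + x • (R : Set T)) * (P + y • (R : Set T)) ⊆ P := by
  rintro _ ⟨_, ⟨p, hp, _, ⟨r, hr, rfl⟩, rfl⟩, _, ⟨q, hq, _, ⟨s, hs, rfl⟩, rfl⟩,
    rfl⟩
  obtain ⟨-, hadd, hsmul⟩ := hP
  have expand :
      (p + x * r) * (q + y * s) = (q + y * s) * p + (x * r) * q + (r * s) * (x * y) := by
    ring
  show (p + x * r) * (q + y * s) ∈ P
  rw [expand]
  exact hadd _ (hadd _ (hsmul _ (R.add_mem (hPR hq) (R.mul_mem hy hs)) _ hp)
    _ (hsmul _ (R.mul_mem hx hr) _ hq)) _ (hsmul _ (R.mul_mem hr hs) _ hxy)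

/-- The `v`-analogue of Krull's lemma: a regular `v`-ideal maximal among those containing `a`
and missing the powers of `b` is prime. -/
lemma IsMoriRing.exists_isRegularPrimeVIdeal (hmori : IsMoriRing R) {a b : T}
    (ha : a ∈ reg (R : Set T)) (hau : IsUnit a)
    (hpow : ∀ n : ℕ, b ^ n ∉ a • (R : Set T)) :
    ∃ P, IsRegularPrimeVIdeal R P ∧ a ∈ P ∧ ∀ n : ℕ, b ^ n ∉ P := by
  let F : Set T → Prop := fun J => IsRegularVIdeal R J ∧ a ∈ J ∧ ∀ n : ℕ, b ^ n ∉ J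
  have haR : a ∈ a • (R : Set T) := ⟨1, R.one_mem, mul_one a⟩
  have haF : F (a • (R : Set T)) := by
    refine ⟨⟨?_, vOp_smul_subring R hau, a, haR, ha⟩, haR, hpow⟩
    rintro _ ⟨r, hr, rfl⟩
    exact R.mul_mem ha.1 hr
  obtain ⟨P, ⟨⟨hPR, hPv, hPreg⟩, haP, hbP⟩, hmax⟩ :=
    hmori.exists_maximal (fun J hJ => hJ.1) haF
  have hP : IsSubmoduleOf R P := hPv ▸ isSubmoduleOf_colonS R _
  have hout : ∀ x ∈ R, x ∉ P → ∃ m, b ^ m ∈ vOp R (P + x • (R : Set T)) := by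
    intro x hx hxP
    by_contra! hno
    have hPx : P ⊆ vOp R (P + x • (R : Set T)) := fun p hp =>
      subset_vOp R _ ⟨p, hp, 0, ⟨0, R.zero_mem, smul_zero x⟩, add_zero p⟩
    have hreg : IsRegularVIdeal R (vOp R (P + x • (R : Set T))) := by
      refine ⟨vOp_subset_of_subset R ?_, vOp_vOp R _, a, hPx haP, ha⟩
      rintro _ ⟨p, hp, _, ⟨r, hr, rfl⟩, rfl⟩
      exact R.add_mem (hPR hp) (R.mul_mem hx hr)
    refine hxP (hmax _ ⟨hreg, hPx haP, hno⟩ hPx ▸ subset_vOp R _ ?_)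
    exact ⟨0, hP.1, x, ⟨1, R.one_mem, mul_one x⟩, zero_add x⟩
  have hPne : P ≠ R := fun h => hbP 0 (by rw [h, pow_zero]; exact R.one_mem)
  refine ⟨P, ⟨⟨⟨hP, hPR⟩, hPne, ?_⟩, hPv, hPreg⟩, haP, hbP⟩
  intro x hx y hy hxy
  by_contra! hxyP
  obtain ⟨m, hm⟩ := hout x hx hxyP.1
  obtain ⟨k, hk⟩ := hout y hy hxyP.2
  refine hbP (m + k) (hPv ▸ vOp_mono R (hP.add_smul_mul_add_smul_subset hPR hx hy hxy) ?_)
  rw [pow_add]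
  exact mul_mem_vOp R hm hk

end Prime

section Unique

variable {T : Type*} [CommRing T] {R : Subring T} {P : Set T}

lemma mem_of_forall_isRegularPrimeVIdeal_eq (hmori : IsMoriRing R)
    (huniq : ∀ Q, IsRegularPrimeVIdeal R Q → Q = P) {c : T} (hc : c ∈ reg (R : Set T))
    (hcu : IsUnit c) (hc1 : c ∉ unitsIn (R : Set T)) : c ∈ P := by
  have hpow (n : ℕ) : (1 : T) ^ n ∉ c • (R : Set T) := by
    rintro ⟨r, hr, hcr⟩
    exact hc1 ⟨hc.1, r, hr, by simpa using hcr⟩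
  obtain ⟨Q, hQ, hcQ, -⟩ := hmori.exists_isRegularPrimeVIdeal hc hcu hpow
  exact huniq Q hQ ▸ hcQ

lemma exists_pow_mem_smul_of_forall_isRegularPrimeVIdeal_eq (hmori : IsMoriRing R)
    (huniq : ∀ Q, IsRegularPrimeVIdeal R Q → Q = P) {a c : T} (ha : a ∈ reg (R : Set T))
    (hau : IsUnit a) (hc : c ∈ P) : ∃ n : ℕ, c ^ n ∈ a • (R : Set T) := by
  by_contra! hpow
  obtain ⟨Q, hQ, -, hcQ⟩ := hmori.exists_isRegularPrimeVIdeal ha hau hpow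
  exact hcQ 1 (by simpa [huniq Q hQ] using hc)

end Unique

theorem stmt13_general {T : Type*} [CommRing T] (R : Subring T)
    (hreg : ∀ x ∈ reg (R : Set T), IsUnit x)
    (hvm : IsVMarot R) (hmori : IsMoriRing R)
    (hne : reg (R : Set T) ≠ unitsIn (R : Set T))
    (huniq : ∃! P : Set T,
      IsPrimeIdealOf R P ∧ vOp R P = P ∧ ∃ x ∈ P, x ∈ reg (R : Set T)) :
    IsStronglyPrimaryRing R := by
  obtain ⟨P, hP, hPuniq⟩ := huniq
  have hPR : P ⊆ R := hP.1.1.2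
  have mem_P (c : T) (hc : c ∈ reg (R : Set T)) (hc1 : c ∉ unitsIn (R : Set T)) : c ∈ P :=
    mem_of_forall_isRegularPrimeVIdeal_eq hmori hPuniq hc (hreg c hc) hc1
  refine ⟨hne, fun a ha ha1 => ?_⟩
  have haP := mem_P a ha ha1
  have hPgen := hvm.eq_vOp_inter_reg hP.1.1 hP.2.1 haP (hreg a ha)
  obtain ⟨G, hGP, hGv⟩ :=
    hmori.exists_finset_vOp_eq (Set.inter_subset_left.trans hPR) ⟨haP, ha⟩ ha
  obtain ⟨N, hN, hGN⟩ := exists_pow_subset_smul_subring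
    (hGP.trans (Set.inter_subset_left.trans hPR)) ha.1 fun g hg =>
      exists_pow_mem_smul_of_forall_isRegularPrimeVIdeal_eq hmori hPuniq ha (hreg a ha)
        (hGP hg).1
  refine ⟨N, hN, fun f hf => ?_⟩
  have hfG (i : Fin N) : f i ∈ vOp R ↑G := hGv ▸ hPgen ▸ mem_P _ (hf i).1 (hf i).2
  obtain ⟨r, hr, hfr⟩ : ∏ i, f i ∈ a • (R : Set T) :=
    vOp_smul_subring R (hreg a ha) ▸ vOp_mono R hGN (prod_mem_vOp_pow R f hfG)
  exact ⟨r, mem_reg_of_mul_mem_reg R hr (hfr ▸ prod_mem_reg R f fun i => (hf i).1), hfr.symm⟩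

/-- a `v`-Marot Mori ring `R` with `R^• ≠ R^×` having exactly one
regular prime `v`-ideal is strongly primary. -/
theorem stmt13 {T : Type*} [CommRing T] [Nontrivial T] (R : Subring T)
    (hreg : ∀ x ∈ reg (R : Set T), IsUnit x)
    (hfr : ∀ t : T, ∃ r ∈ (R : Set T), ∃ s ∈ reg (R : Set T), t * s = r)
    (hvm : IsVMarot R) (hmori : IsMoriRing R)
    (hne : reg (R : Set T) ≠ unitsIn (R : Set T))
    (huniq : ∃! P : Set T,
      IsPrimeIdealOf R P ∧ vOp R P = P ∧ ∃ x ∈ P, x ∈ reg (R : Set T)) :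
    IsStronglyPrimaryRing R :=
  stmt13_general R hreg hvm hmori hne huniq

end Paper
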